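/- Let 0 < ε ≤ 1/4 and C₀ ≥ 1. There is a constant C = C(ε, C₀) such that the following holds. Let a : ℕ → ℝ satisfy |a(n)| ≤ C₀ n^{1/4+ε} for all n ≥ 1 and ∑_{1 ≤ n ≤ X} a(n)² ≤ C₀ X (1 + log X) for all real X ≥ 1. Let p be a prime, let d ∈ {1, p}, let M, N be real numbers with M ≥ 1 and N ≥ 20M, and let V₁, V₂ : ℝ → ℝ vanish outside [1,2] and satisfy |V₁(x)| ≤ 1 and |V₂(x)| ≤ 1 for all x. Then | (d/√(MN)) ∑ a(m) a(n) V₁(m/M) V₂(n/N) | ≤ C · M^{1/2+ε} N^{3/4+ε}, where the sum runs over all pairs of positive integers (m, n) with m ≡ n (mod d), m ≠ n, and gcd(mn, p) = 1. -/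

import Mathlib

/-!
Only the trivial bound is needed: drop the weights and the coprimality condition and sum
`|a m| |a n|`. By Cauchy–Schwarz and the mean-square bound (with `log X ≪_ε X ^ (2ε)`),
`∑_{m ≤ 2M} |a m| ≪ M ^ (1 + ε)`. For fixed `m`, the `n ≤ 2N` with `n ≡ m (mod d)`, `n ≠ m` number
`≪ N / d` (none unless `d ≤ 2N`), each with `|a n| ≪ N ^ (1/4 + ε)`, so the inner sum is
`≪ N ^ (5/4 + ε) / d`. Multiplying by `d / √(MN)` gives `M ^ (1/2 + ε) N ^ (3/4 + ε)`.
-/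

open Finset Real

lemma one_add_log_le_mul_rpow {δ X : ℝ} (hδ : 0 < δ) (hX : 1 ≤ X) :
    1 + log X ≤ (1 + 1 / δ) * X ^ δ := by
  have hlog : log X ≤ X ^ δ / δ := log_le_rpow_div (by linarith) hδ
  have hone : 1 ≤ X ^ δ := one_le_rpow hX hδ.le
  calc 1 + log X ≤ X ^ δ + X ^ δ / δ := by linarith
    _ = (1 + 1 / δ) * X ^ δ := by ring

lemma sum_abs_le_of_sum_sq_le {a : ℕ → ℝ} {C₀ ε X : ℝ} (hC₀ : 0 ≤ C₀) (hε : 0 < ε) (hX : 1 ≤ X)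
    (h : ∑ n ∈ Icc 1 ⌊X⌋₊, a n ^ 2 ≤ C₀ * X * (1 + log X)) :
    ∑ n ∈ Icc 1 ⌊X⌋₊, |a n| ≤ √(C₀ * (1 + 1 / (2 * ε))) * X ^ (1 + ε) := by
  have hX0 : 0 ≤ X := by linarith
  have hcard : (#(Icc 1 ⌊X⌋₊) : ℝ) ≤ X := by
    rw [Nat.card_Icc, Nat.add_sub_cancel]
    exact Nat.floor_le hX0
  have hlog := one_add_log_le_mul_rpow (by positivity : 0 < 2 * ε) hX
  refine le_of_pow_le_pow_left₀ two_ne_zero (by positivity) ?_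
  calc (∑ n ∈ Icc 1 ⌊X⌋₊, |a n|) ^ 2 ≤ #(Icc 1 ⌊X⌋₊) * ∑ n ∈ Icc 1 ⌊X⌋₊, |a n| ^ 2 :=
        sq_sum_le_card_mul_sum_sq
    _ ≤ X * (C₀ * X * ((1 + 1 / (2 * ε)) * X ^ (2 * ε))) := by
        simp only [sq_abs]
        gcongr
        exact h.trans (by gcongr)
    _ = (√(C₀ * (1 + 1 / (2 * ε))) * X ^ (1 + ε)) ^ 2 := by
        have hsq : (X ^ ε) ^ 2 = X ^ (2 * ε) := by
          rw [← rpow_natCast, ← rpow_mul hX0]; ring_nf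
        rw [mul_pow, sq_sqrt (by positivity), rpow_add' hX0 (by positivity), rpow_one, mul_pow, hsq]
        ring

lemma abs_le_of_mem_Icc_floor {a : ℕ → ℝ} {C₀ s X : ℝ} (hC₀ : 0 ≤ C₀) (hs : 0 ≤ s) (hX : 0 ≤ X)
    (ha : ∀ n : ℕ, 1 ≤ n → |a n| ≤ C₀ * (n : ℝ) ^ s) :
    ∀ n ∈ Icc 1 ⌊X⌋₊, |a n| ≤ C₀ * X ^ s := by
  intro n hn
  rw [mem_Icc] at hn
  exact (ha n hn.1).trans (by gcongr; exact (Nat.le_floor_iff hX).1 hn.2)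

/-- A residue class mod `d` has at most `(K + 1) / d + 1` elements in `[0, K]`, and at least two
only if `d ≤ K`. -/
lemma mul_card_filter_ne_modEq_le {d K m : ℕ} (hm : m ≤ K) :
    d * #{n ∈ Icc 1 K | n ≠ m ∧ n ≡ m [MOD d]} ≤ 3 * K := by
  rcases Nat.eq_zero_or_pos d with rfl | hd
  · simp
  rcases lt_or_ge K d with hKd | hdK
  · have hempty : {n ∈ Icc 1 K | n ≠ m ∧ n ≡ m [MOD d]} = ∅ := by
      refine filter_eq_empty_iff.2 fun n hn ⟨hne, hmod⟩ => hne (hmod.eq_of_lt_of_lt ?_ ?_)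
      · exact (mem_Icc.1 hn).2.trans_lt hKd
      · exact hm.trans_lt hKd
    simp [hempty]
  have hsub : {n ∈ Icc 1 K | n ≠ m ∧ n ≡ m [MOD d]} ⊆ {n ∈ range (K + 1) | n ≡ m [MOD d]} :=
    fun n hn => by
      simp only [mem_filter, mem_Icc, mem_range] at hn ⊢
      exact ⟨by omega, hn.2.2⟩
  have hcount : #{n ∈ range (K + 1) | n ≡ m [MOD d]} ≤ (K + 1) / d + 1 := by
    rw [← Nat.count_eq_card_filter_range, Nat.count_modEq_card _ hd]
    split_ifs <;> omega
  calc d * #{n ∈ Icc 1 K | n ≠ m ∧ n ≡ m [MOD d]} ≤ d * ((K + 1) / d + 1) := by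
        gcongr
        exact (card_le_card hsub).trans hcount
    _ ≤ K + 1 + d := by rw [mul_add, mul_one]; gcongr; exact Nat.mul_div_le _ _
    _ ≤ 3 * K := by omega

lemma mul_sum_filter_ne_modEq_le {f : ℕ → ℝ} {d K m : ℕ} {B : ℝ} (hm : m ≤ K) (hB : 0 ≤ B)
    (hf : ∀ n ∈ Icc 1 K, f n ≤ B) :
    d * ∑ n ∈ Icc 1 K with n ≠ m ∧ n ≡ m [MOD d], f n ≤ 3 * K * B := by
  have hsum : ∑ n ∈ Icc 1 K with n ≠ m ∧ n ≡ m [MOD d], f n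
      ≤ #{n ∈ Icc 1 K | n ≠ m ∧ n ≡ m [MOD d]} * B := by
    rw [← nsmul_eq_mul]
    exact sum_le_card_nsmul _ _ _ fun n hn => hf n (mem_filter.1 hn).1
  have hcard : (d * #{n ∈ Icc 1 K | n ≠ m ∧ n ≡ m [MOD d]} : ℝ) ≤ 3 * K := by
    exact_mod_cast mul_card_filter_ne_modEq_le hm
  calc (d : ℝ) * ∑ n ∈ Icc 1 K with n ≠ m ∧ n ≡ m [MOD d], f n
      ≤ d * (#{n ∈ Icc 1 K | n ≠ m ∧ n ≡ m [MOD d]} * B) := by gcongr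
    _ = d * #{n ∈ Icc 1 K | n ≠ m ∧ n ≡ m [MOD d]} * B := by ring
    _ ≤ 3 * K * B := by gcongr

lemma apply_div_eq_zero_of_floor_lt {V : ℝ → ℝ} {X : ℝ} {n : ℕ}
    (hV : ∀ x : ℝ, x ∉ Set.Icc (1 : ℝ) 2 → V x = 0) (hX : 0 < X) (hn : ⌊2 * X⌋₊ < n) :
    V (n / X) = 0 := by
  refine hV _ fun hx => ?_
  have h2X : 2 * X < n := Nat.lt_of_floor_lt hn
  have : (n : ℝ) ≤ 2 * X := (div_le_iff₀ hX).1 hx.2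
  linarith

section OffDiagonal

variable (a : ℕ → ℝ) (p d : ℕ) (V₁ V₂ : ℝ → ℝ) (M N : ℝ)

/-- The summand of `𝒮_{N,M,p,d}`, as a function of `(m, n)`. -/
noncomputable def offDiagTerm (mn : ℕ × ℕ) : ℝ :=
  if 1 ≤ mn.1 ∧ 1 ≤ mn.2 ∧ (d : ℤ) ∣ ((mn.1 : ℤ) - (mn.2 : ℤ)) ∧ mn.1 ≠ mn.2
      ∧ Nat.Coprime (mn.1 * mn.2) p
  then a mn.1 * a mn.2 * V₁ ((mn.1 : ℝ) / M) * V₂ ((mn.2 : ℝ) / N) else 0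

variable {a p d V₁ V₂ M N}

lemma offDiagTerm_eq_zero_of_notMem (hV₁ : ∀ x : ℝ, x ∉ Set.Icc (1 : ℝ) 2 → V₁ x = 0)
    (hV₂ : ∀ x : ℝ, x ∉ Set.Icc (1 : ℝ) 2 → V₂ x = 0) (hM : 0 < M) (hN : 0 < N)
    {mn : ℕ × ℕ} (h : mn ∉ Icc 1 ⌊2 * M⌋₊ ×ˢ Icc 1 ⌊2 * N⌋₊) :
    offDiagTerm a p d V₁ V₂ M N mn = 0 := by
  obtain ⟨m, n⟩ := mn
  unfold offDiagTerm
  split_ifs with hc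
  · simp only [mem_product, mem_Icc, not_and_or, not_le] at h
    rcases h with (h | h) | (h | h)
    · omega
    · rw [apply_div_eq_zero_of_floor_lt hV₁ hM h]; ring
    · omega
    · rw [apply_div_eq_zero_of_floor_lt hV₂ hN h]; ring
  · rfl

lemma abs_offDiagTerm_le (hV₁ : ∀ x : ℝ, |V₁ x| ≤ 1) (hV₂ : ∀ x : ℝ, |V₂ x| ≤ 1) (m n : ℕ) :
    |offDiagTerm a p d V₁ V₂ M N (m, n)| ≤ if n ≠ m ∧ n ≡ m [MOD d] then |a m| * |a n| else 0 := by
  unfold offDiagTerm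
  split_ifs with hc hmod
  · calc |a m * a n * V₁ (m / M) * V₂ (n / N)| = |a m| * |a n| * |V₁ (m / M)| * |V₂ (n / N)| := by
          simp only [abs_mul]
      _ ≤ |a m| * |a n| * 1 * 1 := by gcongr <;> simp only [hV₁, hV₂]
      _ = |a m| * |a n| := by ring
  · exact absurd ⟨Ne.symm hc.2.2.2.1, Nat.modEq_iff_dvd.2 hc.2.2.1⟩ hmod
  · rw [abs_zero]; positivity
  · rw [abs_zero]

lemma mul_abs_sum_offDiagTerm_le (hV₁ : ∀ x : ℝ, |V₁ x| ≤ 1) (hV₂ : ∀ x : ℝ, |V₂ x| ≤ 1)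
    {K₁ K₂ : ℕ} {A B : ℝ} (hB₀ : 0 ≤ B) (hA : ∑ m ∈ Icc 1 K₁, |a m| ≤ A)
    (hB : ∀ m ∈ Icc 1 K₁, d * ∑ n ∈ Icc 1 K₂ with n ≠ m ∧ n ≡ m [MOD d], |a n| ≤ B) :
    d * |∑ mn ∈ Icc 1 K₁ ×ˢ Icc 1 K₂, offDiagTerm a p d V₁ V₂ M N mn| ≤ A * B := by
  have htriangle : |∑ mn ∈ Icc 1 K₁ ×ˢ Icc 1 K₂, offDiagTerm a p d V₁ V₂ M N mn|
      ≤ ∑ m ∈ Icc 1 K₁, |a m| * ∑ n ∈ Icc 1 K₂ with n ≠ m ∧ n ≡ m [MOD d], |a n| := by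
    refine (abs_sum_le_sum_abs _ _).trans ?_
    rw [sum_product]
    refine sum_le_sum fun m _ => ?_
    rw [sum_filter, mul_sum]
    refine (sum_le_sum fun n _ => abs_offDiagTerm_le hV₁ hV₂ m n).trans_eq ?_
    exact sum_congr rfl fun n _ => by rw [mul_ite, mul_zero]
  calc d * |∑ mn ∈ Icc 1 K₁ ×ˢ Icc 1 K₂, offDiagTerm a p d V₁ V₂ M N mn|
      ≤ d * ∑ m ∈ Icc 1 K₁, |a m| * ∑ n ∈ Icc 1 K₂ with n ≠ m ∧ n ≡ m [MOD d], |a n| := by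
        gcongr
    _ = ∑ m ∈ Icc 1 K₁, |a m| * (d * ∑ n ∈ Icc 1 K₂ with n ≠ m ∧ n ≡ m [MOD d], |a n|) := by
        rw [mul_sum]; exact sum_congr rfl fun m _ => by ring
    _ ≤ ∑ m ∈ Icc 1 K₁, |a m| * B := sum_le_sum fun m hm => by gcongr; exact hB m hm
    _ ≤ A * B := by rw [← sum_mul]; gcongr

end OffDiagonal

theorem stmt2 (ε C₀ : ℝ) (hε : 0 < ε) (hC₀ : 1 ≤ C₀) :
    ∃ C : ℝ, 0 < C ∧
    ∀ a : ℕ → ℝ,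
      (∀ n : ℕ, 1 ≤ n → |a n| ≤ C₀ * (n : ℝ) ^ ((1 : ℝ)/4 + ε)) →
      (∀ X : ℝ, 1 ≤ X → ∑ n ∈ Finset.Icc 1 ⌊X⌋₊, (a n)^2 ≤ C₀ * X * (1 + Real.log X)) →
      ∀ p : ℕ, p.Prime → ∀ d : ℕ, (d = 1 ∨ d = p) →
      ∀ M N : ℝ, 1 ≤ M → 20 * M ≤ N →
      ∀ V₁ V₂ : ℝ → ℝ,
        (∀ x : ℝ, x ∉ Set.Icc (1 : ℝ) 2 → V₁ x = 0) → (∀ x : ℝ, |V₁ x| ≤ 1) →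
        (∀ x : ℝ, x ∉ Set.Icc (1 : ℝ) 2 → V₂ x = 0) → (∀ x : ℝ, |V₂ x| ≤ 1) →
        |((d : ℝ) / Real.sqrt (M * N)) * ∑' mn : ℕ × ℕ,
            (if 1 ≤ mn.1 ∧ 1 ≤ mn.2 ∧ (d : ℤ) ∣ ((mn.1 : ℤ) - (mn.2 : ℤ)) ∧ mn.1 ≠ mn.2
                ∧ Nat.Coprime (mn.1 * mn.2) p
             then a mn.1 * a mn.2 * V₁ ((mn.1 : ℝ) / M) * V₂ ((mn.2 : ℝ) / N) else 0)|
        ≤ C * M ^ ((1 : ℝ)/2 + ε) * N ^ ((3 : ℝ)/4 + ε) := by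
  have hC₀' : 0 < C₀ := by linarith
  refine ⟨3 * C₀ * √(C₀ * (1 + 1 / (2 * ε))) * 2 ^ (1 + ε) * 2 ^ ((1 : ℝ) / 4 + ε + 1),
    by positivity, ?_⟩
  intro a ha hRS p _ d _ M N hM hMN V₁ V₂ hV₁0 hV₁ hV₂0 hV₂
  have hM0 : 0 < M := by linarith
  have hN0 : 0 < N := by linarith
  have hK : ⌊2 * M⌋₊ ≤ ⌊2 * N⌋₊ := Nat.floor_le_floor (by linarith)
  have hA := sum_abs_le_of_sum_sq_le hC₀'.le hε (by linarith) (hRS (2 * M) (by linarith))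
  have hB : ∀ m ∈ Icc 1 ⌊2 * M⌋₊, d * ∑ n ∈ Icc 1 ⌊2 * N⌋₊ with n ≠ m ∧ n ≡ m [MOD d], |a n|
      ≤ 3 * (2 * N) * (C₀ * (2 * N) ^ ((1 : ℝ) / 4 + ε)) := fun m hm =>
    (mul_sum_filter_ne_modEq_le ((mem_Icc.1 hm).2.trans hK) (by positivity)
      (abs_le_of_mem_Icc_floor hC₀'.le (by positivity) (by positivity) ha)).trans
      (by gcongr; exact Nat.floor_le (by positivity))
  change |_ * ∑' mn, offDiagTerm a p d V₁ V₂ M N mn| ≤ _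
  rw [tsum_eq_sum fun mn => offDiagTerm_eq_zero_of_notMem hV₁0 hV₂0 hM0 hN0, abs_mul,
    abs_of_nonneg (by positivity), div_mul_eq_mul_div, div_le_iff₀ (by positivity)]
  calc _ ≤ √(C₀ * (1 + 1 / (2 * ε))) * (2 * M) ^ (1 + ε) *
        (3 * (2 * N) * (C₀ * (2 * N) ^ ((1 : ℝ) / 4 + ε))) :=
      mul_abs_sum_offDiagTerm_le hV₁ hV₂ (by positivity) hA hB
    _ = _ := by
      have hMε : M ^ ((1 : ℝ) / 2 + ε) = M ^ (1 + ε) / √M := by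
        rw [sqrt_eq_rpow, ← rpow_sub hM0]; ring_nf
      have hNε : N ^ ((3 : ℝ) / 4 + ε) = N ^ ((1 : ℝ) / 4 + ε) * N / √N := by
        rw [sqrt_eq_rpow, ← rpow_add_one hN0.ne', ← rpow_sub hN0]; ring_nf
      rw [hMε, hNε, mul_rpow, mul_rpow, rpow_add_one two_ne_zero, sqrt_mul hM0.le]
      · field_simp
      all_goals positivity
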